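/- arXiv:0903.4518 — 3 statements merged into one kernel-verified Lean document; each statement's English description precedes it below -/
import Mathlib

section
/- Let d ≥ 2, λ > (d−1)/2, T > 0 and q ≥ 1. For τ > 0, define on ℝ^d the kernel G_τ(y) = (4πτ)^{−d/2} Σ_{k∈ℤ} exp(−|y − k e₁|²/(4τ)) (periodization in the first coordinate only), and set π(y) = 1 + |y^{2…d}|^{2λ}. Then there is a constant K, depending only on d, λ, q and T, such that for all τ ∈ (0,T], ( ∫_{[0,1)×ℝ^{d−1}} |∇G_τ(y)|^q π(y) dy )^{1/q} ≤ K τ^{−((d+1)/2 − d/(2q))}. -/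
/-!
Each summand of `∇G_τ` has the form `x e^{-|x|²/(4τ)} / (2τ)`, and `|x| e^{-|x|²/(8τ)} ≤ √(8τ)`,
so `|∇G_τ(y)| ≲ τ^{-(d+1)/2} e^{-|y'|²/(8τ)} S_{8τ}(y₁)` with the periodized Gaussian
`S_s(t) = ∑_k e^{-(t-k)²/s}`. For `t ∈ [0,1]` and `τ ≤ T`, `S_{8τ}(t)` is bounded uniformly, which
absorbs the power `q - 1`; half of the Gaussian decay in `y'` absorbs the weight `1 + |y'|^{2λ}`.
What remains integrates exactly: over one period `S_s` integrates to the Gaussian integral over the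
line, `√(πs)`, and with the `(d-1)`-dimensional Gaussian integral this gives the factor `τ^{d/2}`.
-/

open MeasureTheory Real

/-- The reference measure on `𝕋 × ℝ^{d-1}`, identified with `[0,1) × ℝ^{d-1}`. -/
noncomputable def cylMeasure (k : ℕ) : Measure (ℝ × EuclideanSpace ℝ (Fin k)) :=
  (volume.restrict (Set.Ico (0:ℝ) 1)).prod volume

/-- The gradient of the heat kernel on `𝕋 × ℝ^{d-1}` (periodized in the first
coordinate only):
`∇G_τ(y) = -(4πτ)^{-d/2} ∑_{k∈ℤ} ((y - k e₁)/(2τ)) exp(-|y - k e₁|²/(4τ))`. -/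
noncomputable def gradCylHeatKernel (d : ℕ) (τ : ℝ)
    (y : ℝ × EuclideanSpace ℝ (Fin (d - 1))) : ℝ × EuclideanSpace ℝ (Fin (d - 1)) :=
  -((4 * π * τ) ^ (-(d : ℝ) / 2)) •
    ∑' k : ℤ,
      Real.exp (-((y.1 - (k : ℝ)) ^ 2 + ‖y.2‖ ^ 2) / (4 * τ)) •
        ((2 * τ)⁻¹ • ((y.1 - (k : ℝ), y.2) : ℝ × EuclideanSpace ℝ (Fin (d - 1))))

/-- The Euclidean norm of an element of `ℝ × ℝ^{d-1}`. -/
noncomputable def pairNorm {k : ℕ} (p : ℝ × EuclideanSpace ℝ (Fin k)) : ℝ :=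
  Real.sqrt (p.1 ^ 2 + ‖p.2‖ ^ 2)

open Set

namespace CylHeatKernel

lemma mul_exp_neg_sq_div_le_sqrt {a r : ℝ} (ha : 0 < a) :
    r * exp (-(r ^ 2 / a)) ≤ √a := by
  have hsa : 0 < √a := sqrt_pos.2 ha
  set u := r / √a
  have hu2 : u ^ 2 = r ^ 2 / a := by rw [div_pow, sq_sqrt ha.le]
  have hu : u * exp (-u ^ 2) ≤ 1 := by
    have : u ≤ exp (u ^ 2) := by nlinarith [add_one_le_exp (u ^ 2), sq_nonneg (u - 1)]
    calc u * exp (-u ^ 2) ≤ exp (u ^ 2) * exp (-u ^ 2) := by gcongr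
      _ = 1 := by rw [← exp_add, add_neg_cancel, exp_zero]
  calc r * exp (-(r ^ 2 / a)) = √a * (u * exp (-u ^ 2)) := by
        rw [hu2, ← mul_assoc, mul_div_cancel₀ _ hsa.ne']
    _ ≤ √a := mul_le_of_le_one_right hsa.le hu

lemma rpow_mul_exp_neg_le {v p : ℝ} (hv : 0 ≤ v) (hp : 0 < p) : v ^ p * exp (-v) ≤ p ^ p := by
  have h : (v / p) ^ p ≤ exp v :=
    calc (v / p) ^ p ≤ exp (v / p) ^ p := by
          gcongr
          linarith [add_one_le_exp (v / p)]
      _ = exp v := by rw [← exp_mul, div_mul_cancel₀ _ hp.ne']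
  rw [div_rpow hv hp.le, div_le_iff₀ (rpow_pos_of_pos hp _)] at h
  calc v ^ p * exp (-v) ≤ exp v * p ^ p * exp (-v) := by gcongr
    _ = p ^ p := by rw [mul_comm (exp v), mul_assoc, ← exp_add, add_neg_cancel, exp_zero, mul_one]

lemma rpow_le_rpow_sub_one_mul {x M q : ℝ} (hx : 0 ≤ x) (hxM : x ≤ M) (hq : 1 ≤ q) :
    x ^ q ≤ M ^ (q - 1) * x :=
  calc x ^ q = x ^ (q - 1) * x := by rw [← rpow_add_one' hx (by linarith), sub_add_cancel]
    _ ≤ M ^ (q - 1) * x := by gcongr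

lemma integral_le_of_norm_le_of_lintegral_le {α : Type*} [MeasurableSpace α] {μ : Measure α}
    {f g : α → ℝ} {c : ℝ} (hc : 0 ≤ c) (hfg : ∀ᵐ x ∂μ, ‖f x‖ ≤ g x)
    (hg : ∫⁻ x, ENNReal.ofReal (g x) ∂μ ≤ ENNReal.ofReal c) : ∫ x, f x ∂μ ≤ c :=
  (le_norm_self _).trans <| (norm_integral_le_lintegral_norm f).trans <|
    ENNReal.toReal_le_of_le_ofReal hc <|
      (lintegral_mono_ae (hfg.mono fun _ hx => ENNReal.ofReal_le_ofReal hx)).trans hg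

lemma lintegral_exp_neg_sq_div {s : ℝ} (hs : 0 < s) :
    ∫⁻ t : ℝ, ENNReal.ofReal (exp (-(t ^ 2 / s))) = ENNReal.ofReal √(π * s) := by
  have h : ∫ t : ℝ, exp (-(t ^ 2 / s)) = √(π * s) := by
    simpa [div_eq_inv_mul, mul_comm π] using integral_gaussian s⁻¹
  rw [← h, ofReal_integral_eq_lintegral_ofReal
    (.of_integral_ne_zero (h ▸ (sqrt_pos.2 (by positivity)).ne'))
    (ae_of_all _ fun _ => (exp_pos _).le)]

lemma lintegral_exp_neg_sq_norm_div {V : Type*} [NormedAddCommGroup V] [InnerProductSpace ℝ V]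
    [FiniteDimensional ℝ V] [MeasurableSpace V] [BorelSpace V] {s : ℝ} (hs : 0 < s) :
    ∫⁻ v : V, ENNReal.ofReal (exp (-(‖v‖ ^ 2 / s))) =
      ENNReal.ofReal ((π * s) ^ ((Module.finrank ℝ V : ℝ) / 2)) := by
  have h : ∫ v : V, exp (-(‖v‖ ^ 2 / s)) = (π * s) ^ ((Module.finrank ℝ V : ℝ) / 2) := by
    simpa [div_eq_inv_mul, mul_comm π] using
      GaussianFourier.integral_rexp_neg_mul_sq_norm (V := V) (inv_pos.2 hs)
  rw [← h, ofReal_integral_eq_lintegral_ofReal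
    (.of_integral_ne_zero (h ▸ (rpow_pos_of_pos (by positivity) _).ne'))
    (ae_of_all _ fun _ => (exp_pos _).le)]

lemma lintegral_eq_tsum_setLIntegral_Ico_add_intCast (f : ℝ → ENNReal) :
    ∫⁻ x, f x = ∑' k : ℤ, ∫⁻ x in Ico 0 1, f (x + k) := by
  rw [← setLIntegral_univ, ← iUnion_Ico_intCast,
    lintegral_iUnion (fun _ => measurableSet_Ico) (pairwise_disjoint_Ico_intCast ℝ)]
  congr 1 with k
  rw [← (measurePreserving_add_right volume (k : ℝ)).setLIntegral_comp_preimage_emb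
    (measurableEmbedding_addRight _)]
  simp [preimage_add_const_Ico]

noncomputable def periodicGauss (s t : ℝ) : ℝ := ∑' k : ℤ, exp (-((t - k) ^ 2 / s))

lemma summable_exp_neg_intCast_sq_div {s : ℝ} (hs : 0 < s) :
    Summable fun k : ℤ => exp (-((k : ℝ) ^ 2 / s)) := by
  have hnat : Summable fun n : ℕ => exp (-((n : ℝ) ^ 2 / s)) := by
    simpa [div_eq_inv_mul] using summable_exp_nat_mul_of_ge (neg_neg_of_pos (inv_pos.2 hs))
      (f := fun n : ℕ => (n : ℝ) ^ 2) fun n => by exact_mod_cast Nat.le_self_pow two_ne_zero n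
  exact .of_nat_of_neg (by simpa using hnat) (by simpa using hnat)

lemma exp_neg_sub_sq_div_le {s : ℝ} (hs : 0 < s) (t x : ℝ) :
    exp (-((t - x) ^ 2 / s)) ≤ exp (t ^ 2 / s) * exp (-(x ^ 2 / (2 * s))) := by
  rw [← exp_add]
  gcongr
  have h : t ^ 2 / s + -(x ^ 2 / (2 * s)) = -((t - x) ^ 2 / s) + 2 * (t - x / 2) ^ 2 / s := by
    field_simp; ring
  rw [h]
  linarith [show 0 ≤ 2 * (t - x / 2) ^ 2 / s by positivity]

lemma summable_exp_neg_sub_intCast_sq_div {s : ℝ} (hs : 0 < s) (t : ℝ) :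
    Summable fun k : ℤ => exp (-((t - k) ^ 2 / s)) :=
  ((summable_exp_neg_intCast_sq_div (by positivity : 0 < 2 * s)).mul_left _).of_nonneg_of_le
    (fun _ => (exp_pos _).le) fun k => exp_neg_sub_sq_div_le hs t k

lemma periodicGauss_pos {s : ℝ} (hs : 0 < s) (t : ℝ) : 0 < periodicGauss s t :=
  (exp_pos _).trans_le <|
    (summable_exp_neg_sub_intCast_sq_div hs t).le_tsum 0 fun _ _ => (exp_pos _).le

lemma periodicGauss_mono {s s' : ℝ} (hs : 0 < s) (hss' : s ≤ s') (t : ℝ) :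
    periodicGauss s t ≤ periodicGauss s' t :=
  (summable_exp_neg_sub_intCast_sq_div hs t).tsum_le_tsum
    (fun _ => exp_le_exp.2 <| neg_le_neg <| div_le_div_of_nonneg_left (sq_nonneg _) hs hss')
    (summable_exp_neg_sub_intCast_sq_div (hs.trans_le hss') t)

lemma periodicGauss_le_of_mem_Icc {s s' t : ℝ} (hs : 0 < s) (hss' : s ≤ s')
    (ht : t ∈ Icc 0 1) :
    periodicGauss s t ≤ exp (1 / s') * periodicGauss (2 * s') 0 := by
  have hs' := hs.trans_le hss'
  calc periodicGauss s t ≤ periodicGauss s' t := periodicGauss_mono hs hss' t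
    _ ≤ ∑' k : ℤ, exp (t ^ 2 / s') * exp (-((k : ℝ) ^ 2 / (2 * s'))) :=
        (summable_exp_neg_sub_intCast_sq_div hs' t).tsum_le_tsum
          (fun k => exp_neg_sub_sq_div_le hs' t k)
          ((summable_exp_neg_intCast_sq_div (by positivity)).mul_left _)
    _ ≤ exp (1 / s') * periodicGauss (2 * s') 0 := by
        rw [tsum_mul_left, periodicGauss]
        simp only [zero_sub, neg_sq]
        gcongr
        nlinarith [ht.1, ht.2]

lemma lintegral_Ico_periodicGauss {s : ℝ} (hs : 0 < s) :
    ∫⁻ t in Ico 0 1, ENNReal.ofReal (periodicGauss s t) = ENNReal.ofReal √(π * s) := by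
  rw [← lintegral_exp_neg_sq_div hs, lintegral_eq_tsum_setLIntegral_Ico_add_intCast,
    ← (Equiv.neg ℤ).tsum_eq, ← lintegral_tsum fun _ => by fun_prop]
  refine setLIntegral_congr_fun measurableSet_Ico fun t _ => ?_
  rw [periodicGauss, ENNReal.ofReal_tsum_of_nonneg (fun _ => (exp_pos _).le)
    (summable_exp_neg_sub_intCast_sq_div hs t)]
  simp [sub_eq_add_neg]

lemma lintegral_cylMeasure_periodicGauss_mul (m : ℕ) {s : ℝ} (hs : 0 < s) :
    ∫⁻ y, ENNReal.ofReal (periodicGauss s y.1 * exp (-(‖y.2‖ ^ 2 / s))) ∂cylMeasure m =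
      ENNReal.ofReal ((π * s) ^ (((m : ℝ) + 1) / 2)) := by
  have hmeas : Measurable (periodicGauss s) := Measurable.tsum fun _ => by fun_prop
  simp_rw [ENNReal.ofReal_mul (periodicGauss_pos hs _).le]
  rw [cylMeasure, lintegral_prod_mul hmeas.ennreal_ofReal.aemeasurable
      (g := fun z : EuclideanSpace ℝ (Fin m) => ENNReal.ofReal (exp (-(‖z‖ ^ 2 / s))))
      (by fun_prop),
    lintegral_Ico_periodicGauss hs, lintegral_exp_neg_sq_norm_div hs, finrank_euclideanSpace_fin,
    ← ENNReal.ofReal_mul (by positivity), sqrt_eq_rpow, ← rpow_add (by positivity)]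
  congr 2
  ring

section Gradient

variable {E : Type*} [NormedAddCommGroup E] [NormedSpace ℝ E]

noncomputable def gaussGrad (τ : ℝ) (x : ℝ × E) : ℝ × E :=
  exp (-(x.1 ^ 2 + ‖x.2‖ ^ 2) / (4 * τ)) • ((2 * τ)⁻¹ • x)

lemma norm_gaussGrad_le {τ : ℝ} (hτ : 0 < τ) (x : ℝ × E) :
    ‖gaussGrad τ x‖ ≤ √(8 * τ) / (2 * τ) *
      (exp (-(x.1 ^ 2 / (8 * τ))) * exp (-(‖x.2‖ ^ 2 / (8 * τ)))) := by
  set r := √(x.1 ^ 2 + ‖x.2‖ ^ 2)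
  have hr2 : r ^ 2 = x.1 ^ 2 + ‖x.2‖ ^ 2 := sq_sqrt (by positivity)
  have hx : ‖x‖ ≤ r := by
    rw [Prod.norm_def]
    refine max_le ((abs_le_sqrt ?_).trans_eq' (norm_eq_abs _)) (le_sqrt_of_sq_le ?_) <;>
      nlinarith [sq_nonneg x.1, sq_nonneg ‖x.2‖]
  have hsplit : exp (-(x.1 ^ 2 + ‖x.2‖ ^ 2) / (4 * τ)) = exp (-(r ^ 2 / (8 * τ))) *
      (exp (-(x.1 ^ 2 / (8 * τ))) * exp (-(‖x.2‖ ^ 2 / (8 * τ)))) := by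
    rw [← exp_add, ← exp_add, hr2]
    congr 1
    field_simp
    ring
  calc ‖gaussGrad τ x‖
      = exp (-(x.1 ^ 2 + ‖x.2‖ ^ 2) / (4 * τ)) * ((2 * τ)⁻¹ * ‖x‖) := by
        rw [gaussGrad, norm_smul, norm_smul, norm_of_nonneg (exp_pos _).le,
          norm_of_nonneg (by positivity)]
    _ ≤ exp (-(x.1 ^ 2 + ‖x.2‖ ^ 2) / (4 * τ)) * ((2 * τ)⁻¹ * r) := by gcongr
    _ = (2 * τ)⁻¹ * (r * exp (-(r ^ 2 / (8 * τ)))) *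
          (exp (-(x.1 ^ 2 / (8 * τ))) * exp (-(‖x.2‖ ^ 2 / (8 * τ)))) := by
        rw [hsplit]
        ring
    _ ≤ (2 * τ)⁻¹ * √(8 * τ) *
          (exp (-(x.1 ^ 2 / (8 * τ))) * exp (-(‖x.2‖ ^ 2 / (8 * τ)))) := by
        gcongr
        exact mul_exp_neg_sq_div_le_sqrt (by positivity)
    _ = _ := by ring

lemma norm_tsum_gaussGrad_le {τ : ℝ} (hτ : 0 < τ) (y : ℝ × E) :
    ‖∑' k : ℤ, gaussGrad τ (y.1 - k, y.2)‖ ≤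
      √(8 * τ) / (2 * τ) *
        (periodicGauss (8 * τ) y.1 * exp (-(‖y.2‖ ^ 2 / (8 * τ)))) := by
  have hsum := ((summable_exp_neg_sub_intCast_sq_div (by positivity : 0 < 8 * τ) y.1).mul_right
    (exp (-(‖y.2‖ ^ 2 / (8 * τ))))).mul_left (√(8 * τ) / (2 * τ))
  refine (tsum_of_norm_bounded hsum.hasSum fun k =>
    norm_gaussGrad_le hτ (y.1 - k, y.2)).trans_eq ?_
  rw [tsum_mul_left, tsum_mul_right, periodicGauss]

end Gradient

lemma gradCylHeatKernel_eq_smul_tsum_gaussGrad (d : ℕ) (τ : ℝ)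
    (y : ℝ × EuclideanSpace ℝ (Fin (d - 1))) :
    gradCylHeatKernel d τ y = -((4 * π * τ) ^ (-(d : ℝ) / 2)) •
      ∑' k : ℤ, gaussGrad τ (y.1 - k, y.2) :=
  rfl

lemma pairNorm_nonneg {m : ℕ} (p : ℝ × EuclideanSpace ℝ (Fin m)) : 0 ≤ pairNorm p :=
  sqrt_nonneg _

lemma pairNorm_smul {m : ℕ} (c : ℝ) (p : ℝ × EuclideanSpace ℝ (Fin m)) :
    pairNorm (c • p) = |c| * pairNorm p := by
  rw [pairNorm, pairNorm, Prod.smul_fst, Prod.smul_snd, smul_eq_mul, norm_smul, norm_eq_abs,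
    mul_pow, mul_pow, sq_abs, ← mul_add, sqrt_mul (sq_nonneg _), sqrt_sq_eq_abs]

-- The norm of a product type is the sup norm, whereas `pairNorm` is the Euclidean one.
lemma pairNorm_le_sqrt_two_mul_norm {m : ℕ} (p : ℝ × EuclideanSpace ℝ (Fin m)) :
    pairNorm p ≤ √2 * ‖p‖ := by
  rw [pairNorm, ← sqrt_sq (norm_nonneg p), ← sqrt_mul zero_le_two]
  gcongr
  have h1 : p.1 ^ 2 ≤ ‖p‖ ^ 2 := by
    rw [← sq_abs, ← norm_eq_abs]
    exact pow_le_pow_left₀ (norm_nonneg _) (norm_fst_le p) 2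
  have h2 : ‖p.2‖ ^ 2 ≤ ‖p‖ ^ 2 := pow_le_pow_left₀ (norm_nonneg _) (norm_snd_le p) 2
  linarith

lemma pairNorm_gradCylHeatKernel_le (d : ℕ) {τ : ℝ} (hτ : 0 < τ)
    (y : ℝ × EuclideanSpace ℝ (Fin (d - 1))) :
    pairNorm (gradCylHeatKernel d τ y) ≤
      2 * (4 * π) ^ (-(d : ℝ) / 2) * τ ^ (-((d : ℝ) + 1) / 2) *
        (periodicGauss (8 * τ) y.1 * exp (-(‖y.2‖ ^ 2 / (8 * τ)))) := by
  have hconst : (4 * π * τ) ^ (-(d : ℝ) / 2) * (√2 * (√(8 * τ) / (2 * τ))) =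
      2 * (4 * π) ^ (-(d : ℝ) / 2) * τ ^ (-((d : ℝ) + 1) / 2) := by
    have h : √2 * (√(8 * τ) / (2 * τ)) = 2 * τ ^ (-(1 / 2 : ℝ)) := by
      rw [← mul_div_assoc, ← sqrt_mul zero_le_two, show 2 * (8 * τ) = 4 ^ 2 * τ by ring,
        sqrt_mul (by positivity), sqrt_sq (by norm_num), rpow_neg hτ.le, ← sqrt_eq_rpow]
      field_simp
      rw [sq_sqrt hτ.le]
      ring
    rw [h, mul_rpow (by positivity) hτ.le,
      show -((d : ℝ) + 1) / 2 = -(d : ℝ) / 2 + -(1 / 2) by ring, rpow_add hτ]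
    ring
  calc pairNorm (gradCylHeatKernel d τ y)
      = (4 * π * τ) ^ (-(d : ℝ) / 2) *
          pairNorm (∑' k : ℤ, gaussGrad τ (y.1 - k, y.2)) := by
        rw [gradCylHeatKernel_eq_smul_tsum_gaussGrad, pairNorm_smul, abs_neg,
          abs_of_pos (by positivity)]
    _ ≤ (4 * π * τ) ^ (-(d : ℝ) / 2) * (√2 * (√(8 * τ) / (2 * τ) *
          (periodicGauss (8 * τ) y.1 * exp (-(‖y.2‖ ^ 2 / (8 * τ)))))) := by
        gcongr
        exact (pairNorm_le_sqrt_two_mul_norm _).trans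
          (by gcongr; exact norm_tsum_gaussGrad_le hτ y)
    _ = _ := by rw [← hconst]; ring

lemma one_add_rpow_mul_exp_le {lam T τ r : ℝ} (hlam : 0 < lam) (hτ : 0 < τ) (hτT : τ ≤ T)
    (hr : 0 ≤ r) :
    (1 + r ^ (2 * lam)) * exp (-(r ^ 2 / (8 * τ))) ≤
      (1 + (16 * T * lam) ^ lam) * exp (-(r ^ 2 / (16 * τ))) := by
  have hT : 0 < T := hτ.trans_le hτT
  have hsplit : exp (-(r ^ 2 / (8 * τ))) =
      exp (-(r ^ 2 / (16 * τ))) * exp (-(r ^ 2 / (16 * τ))) := by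
    rw [← exp_add]
    congr 1
    field_simp
    ring
  set v := r ^ 2 / (16 * τ)
  have hv : 0 ≤ v := by positivity
  have hpow : r ^ (2 * lam) * exp (-v) ≤ (16 * T * lam) ^ lam := by
    have h : r ^ (2 * lam) = (16 * τ) ^ lam * v ^ lam := by
      rw [← mul_rpow (by positivity) hv, mul_div_cancel₀ _ (by positivity), rpow_mul hr,
        rpow_two]
    rw [h, mul_assoc, mul_rpow (by positivity) hlam.le]
    gcongr
    exact rpow_mul_exp_neg_le hv hlam
  calc (1 + r ^ (2 * lam)) * exp (-(r ^ 2 / (8 * τ)))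
      = (exp (-v) + r ^ (2 * lam) * exp (-v)) * exp (-v) := by rw [hsplit]; ring
    _ ≤ (1 + (16 * T * lam) ^ lam) * exp (-v) := by
        gcongr
        exact exp_le_one_iff.2 (neg_nonpos.2 hv)

lemma gradCylHeatKernel_rpow_mul_weight_le (d : ℕ) {lam T τ q : ℝ} (hlam : 0 < lam)
    (hτ : 0 < τ) (hτT : τ ≤ T) (hq : 1 ≤ q) (y : ℝ × EuclideanSpace ℝ (Fin (d - 1)))
    (hy : y.1 ∈ Icc 0 1) :
    pairNorm (gradCylHeatKernel d τ y) ^ q * (1 + ‖y.2‖ ^ (2 * lam)) ≤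
      (2 * (4 * π) ^ (-(d : ℝ) / 2) * τ ^ (-((d : ℝ) + 1) / 2)) ^ q *
        (exp (1 / (8 * T)) * periodicGauss (16 * T) 0) ^ (q - 1) * (1 + (16 * T * lam) ^ lam) *
        (periodicGauss (16 * τ) y.1 * exp (-(‖y.2‖ ^ 2 / (16 * τ)))) := by
  have hT : 0 < T := hτ.trans_le hτT
  set c := 2 * (4 * π) ^ (-(d : ℝ) / 2) * τ ^ (-((d : ℝ) + 1) / 2)
  set M := exp (1 / (8 * T)) * periodicGauss (16 * T) 0
  set S := periodicGauss (8 * τ) y.1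
  set G := exp (-(‖y.2‖ ^ 2 / (8 * τ)))
  have hS : 0 ≤ S := (periodicGauss_pos (by positivity) _).le
  have hM : 0 ≤ M := mul_nonneg (exp_pos _).le (periodicGauss_pos (by positivity) _).le
  have hSq : S ^ q ≤ M ^ (q - 1) * periodicGauss (16 * τ) y.1 := by
    have hSM : S ≤ M := by
      simp only [M, show 16 * T = 2 * (8 * T) by ring]
      exact periodicGauss_le_of_mem_Icc (by positivity) (by linarith) hy
    exact (rpow_le_rpow_sub_one_mul hS hSM hq).trans
      (by gcongr; exact periodicGauss_mono (by positivity) (by linarith) _)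
  have hGq : G ^ q * (1 + ‖y.2‖ ^ (2 * lam)) ≤
      (1 + (16 * T * lam) ^ lam) * exp (-(‖y.2‖ ^ 2 / (16 * τ))) := by
    have h : G ^ q ≤ G :=
      rpow_le_self_of_le_one (exp_pos _).le (exp_le_one_iff.2 (neg_nonpos.2 (by positivity))) hq
    rw [mul_comm]
    exact (mul_le_mul_of_nonneg_left h (by positivity)).trans
      (one_add_rpow_mul_exp_le hlam hτ hτT (norm_nonneg _))
  calc pairNorm (gradCylHeatKernel d τ y) ^ q * (1 + ‖y.2‖ ^ (2 * lam))
      ≤ (c * (S * G)) ^ q * (1 + ‖y.2‖ ^ (2 * lam)) := by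
        gcongr
        · exact pairNorm_nonneg _
        · exact pairNorm_gradCylHeatKernel_le d hτ y
    _ = c ^ q * S ^ q * (G ^ q * (1 + ‖y.2‖ ^ (2 * lam))) := by
        rw [mul_rpow (by positivity) (by positivity), mul_rpow hS (exp_pos _).le]
        ring
    _ ≤ c ^ q * (M ^ (q - 1) * periodicGauss (16 * τ) y.1) *
          ((1 + (16 * T * lam) ^ lam) * exp (-(‖y.2‖ ^ 2 / (16 * τ)))) := by
        have := periodicGauss_pos (by positivity : 0 < 16 * τ) y.1
        gcongr
    _ = _ := by ring

noncomputable def gradIntegralConst (d : ℕ) (lam T q : ℝ) : ℝ :=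
  (2 * (4 * π) ^ (-(d : ℝ) / 2)) ^ q * (exp (1 / (8 * T)) * periodicGauss (16 * T) 0) ^ (q - 1) *
    (1 + (16 * T * lam) ^ lam) * (16 * π) ^ ((d : ℝ) / 2)

lemma gradIntegralConst_pos (d : ℕ) {lam T : ℝ} (q : ℝ) (hlam : 0 < lam) (hT : 0 < T) :
    0 < gradIntegralConst d lam T q := by
  have := periodicGauss_pos (by positivity : 0 < 16 * T) 0
  unfold gradIntegralConst
  positivity

lemma integral_gradCylHeatKernel_rpow_mul_weight_le (d : ℕ) (hd : 1 ≤ d) {lam T τ q : ℝ}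
    (hlam : 0 < lam) (hτ : 0 < τ) (hτT : τ ≤ T) (hq : 1 ≤ q) :
    ∫ y, pairNorm (gradCylHeatKernel d τ y) ^ q * (1 + ‖y.2‖ ^ (2 * lam))
        ∂cylMeasure (d - 1) ≤
      gradIntegralConst d lam T q * τ ^ ((d : ℝ) / 2 - q * ((d : ℝ) + 1) / 2) := by
  have hT : 0 < T := hτ.trans_le hτT
  set K := (2 * (4 * π) ^ (-(d : ℝ) / 2) * τ ^ (-((d : ℝ) + 1) / 2)) ^ q *
    (exp (1 / (8 * T)) * periodicGauss (16 * T) 0) ^ (q - 1) * (1 + (16 * T * lam) ^ lam)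
  have hK : 0 ≤ K := by
    have := periodicGauss_pos (by positivity : 0 < 16 * T) 0
    positivity
  have hKτ : K * (π * (16 * τ)) ^ ((d : ℝ) / 2) =
      gradIntegralConst d lam T q * τ ^ ((d : ℝ) / 2 - q * ((d : ℝ) + 1) / 2) := by
    have hexp :
        (d : ℝ) / 2 - q * ((d : ℝ) + 1) / 2 = -((d : ℝ) + 1) / 2 * q + (d : ℝ) / 2 := by
      ring
    simp only [K, gradIntegralConst]
    rw [mul_rpow (x := 2 * (4 * π) ^ (-(d : ℝ) / 2)) (by positivity) (by positivity),
      ← rpow_mul hτ.le, show π * (16 * τ) = 16 * π * τ by ring,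
      mul_rpow (by positivity) hτ.le, hexp, rpow_add hτ]
    ring
  refine integral_le_of_norm_le_of_lintegral_le (by rw [← hKτ]; positivity)
    (g := fun y => K * (periodicGauss (16 * τ) y.1 * exp (-(‖y.2‖ ^ 2 / (16 * τ))))) ?_ ?_
  · filter_upwards [Measure.quasiMeasurePreserving_fst.ae (ae_restrict_mem measurableSet_Ico)]
      with y hy
    rw [norm_of_nonneg (mul_nonneg (rpow_nonneg (pairNorm_nonneg _) _) (by positivity))]
    exact gradCylHeatKernel_rpow_mul_weight_le d hlam hτ hτT hq y (Ico_subset_Icc_self hy)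
  · simp_rw [ENNReal.ofReal_mul hK]
    rw [lintegral_const_mul' _ _ ENNReal.ofReal_ne_top,
      lintegral_cylMeasure_periodicGauss_mul _ (by positivity), ← hKτ, ENNReal.ofReal_mul hK,
      Nat.cast_sub hd, Nat.cast_one, sub_add_cancel]

end CylHeatKernel

open CylHeatKernel

/-- For `d ≥ 2`, `λ > (d-1)/2`, `T > 0` and `q ≥ 1`, with
`π(y) = 1 + |y^{2…d}|^{2λ}`, there is a constant `K` (depending only on `d, λ, q, T`)
such that for all `τ ∈ (0,T]`,
`(∫_{[0,1)×ℝ^{d-1}} |∇G_τ(y)|^q π(y) dy)^{1/q} ≤ K τ^{-((d+1)/2 - d/(2q))}`. -/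
theorem stmt6 (d : ℕ) (hd : 2 ≤ d) (lam : ℝ) (hlam : ((d : ℝ) - 1) / 2 < lam)
    (T : ℝ) (hT : 0 < T) (q : ℝ) (hq : 1 ≤ q) :
    ∃ K : ℝ, 0 < K ∧
      ∀ τ ∈ Set.Ioc (0:ℝ) T,
        (∫ y, pairNorm (gradCylHeatKernel d τ y) ^ q * (1 + ‖y.2‖ ^ (2 * lam))
            ∂(cylMeasure (d - 1))) ^ (1 / q) ≤
          K * τ ^ (-(((d : ℝ) + 1) / 2 - (d : ℝ) / (2 * q))) := by
  have hlam0 : 0 < lam := by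
    have : (2 : ℝ) ≤ d := by exact_mod_cast hd
    linarith
  have hK := gradIntegralConst_pos d q hlam0 hT
  refine ⟨gradIntegralConst d lam T q ^ (1 / q), rpow_pos_of_pos hK _,
    fun τ ⟨hτ, hτT⟩ => ?_⟩
  refine (rpow_le_rpow
    (integral_nonneg fun y => mul_nonneg (rpow_nonneg (pairNorm_nonneg _) _) (by positivity))
    (integral_gradCylHeatKernel_rpow_mul_weight_le d (by omega) hlam0 hτ hτT hq)
    (by positivity)).trans_eq ?_
  rw [mul_rpow hK.le (by positivity), ← rpow_mul hτ.le]
  congr 2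
  field_simp
  ring
end

section
/- Let d ≥ 2, λ > 0 and q ≥ 1, and set w(x) = (1+|x^{2…d}|²)^λ and π(y) = (1+|y^{2…d}|²)^λ for x, y ∈ ℝ^d. Let f, h : ℝ^d → [0,∞] be measurable and ℤ-periodic in the first coordinate, with ∫_{[0,1)×ℝ^{d−1}} f = 1, and define the convolution (h⋆f)(x) = ∫_{[0,1)×ℝ^{d−1}} h(y) f(x−y) dy. Then ∫_{[0,1)×ℝ^{d−1}} (h⋆f)(x)^q w(x) dx ≤ 2^λ ( ∫_{[0,1)×ℝ^{d−1}} f w ) ( ∫_{[0,1)×ℝ^{d−1}} h(y)^q π(y) dy ). -/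
/-!
Since `y ↦ f (x - y)` is again a probability density on `[0,1) × ℝ^{d-1}`, Jensen's inequality
gives `(h⋆f)^q ≤ h^q⋆f` pointwise. Peetre's inequality `1 + |x|² ≤ 2 (1 + |y|²) (1 + |x - y|²)`
moves the weight inside the convolution: `w · (H⋆f) ≤ 2^λ (H π)⋆(f w)`. Finally, by Tonelli and the
invariance of integrals of periodic functions under translations and reflections, the integral of
a convolution over `[0,1) × ℝ^{d-1}` is the product of the two integrals.
-/

open MeasureTheory ENNReal

open Set

instance Prod.instMeasurableSub₂ {α β : Type*} [MeasurableSpace α] [MeasurableSpace β] [Sub α]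
    [Sub β] [MeasurableSub₂ α] [MeasurableSub₂ β] : MeasurableSub₂ (α × β) :=
  ⟨(measurable_fst.fst.sub measurable_snd.fst).prodMk (measurable_fst.snd.sub measurable_snd.snd)⟩

instance Prod.instMeasurableNeg {α β : Type*} [MeasurableSpace α] [MeasurableSpace β] [Neg α]
    [Neg β] [MeasurableNeg α] [MeasurableNeg β] : MeasurableNeg (α × β) :=
  ⟨measurable_fst.neg.prodMk measurable_snd.neg⟩

theorem rpow_lintegral_mul_le_lintegral_rpow_mul {α : Type*} [MeasurableSpace α] {μ : Measure α}
    {q : ℝ} (hq : 1 ≤ q) {h F : α → ℝ≥0∞} (hh : AEMeasurable h μ) (hF : AEMeasurable F μ)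
    (hF1 : ∫⁻ y, F y ∂μ = 1) :
    (∫⁻ y, h y * F y ∂μ) ^ q ≤ ∫⁻ y, h y ^ q * F y ∂μ := by
  have : IsProbabilityMeasure (μ.withDensity F) := ⟨by simpa using hF1⟩
  have key := eLpNorm'_le_eLpNorm'_mul_rpow_measure_univ one_pos hq
    (hh.mono_ac (withDensity_absolutelyContinuous μ F)).aestronglyMeasurable
  simp only [eLpNorm', enorm_eq_self, rpow_one, div_one, measure_univ, one_rpow, mul_one,
    lintegral_withDensity_eq_lintegral_mul₀ hF hh,
    lintegral_withDensity_eq_lintegral_mul₀ hF (hh.pow_const q), Pi.mul_apply, mul_comm (F _),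
    one_div] at key
  exact (ENNReal.le_rpow_inv_iff (by linarith)).1 key

theorem Function.Periodic.setLIntegral_Ico_comp_sub_left {g : ℝ → ℝ≥0∞} {T : ℝ}
    (hg : Function.Periodic g T) (hT : 0 < T) (c : ℝ) :
    ∫⁻ t in Ico 0 T, g (c - t) = ∫⁻ t in Ico 0 T, g t := by
  have : VAddInvariantMeasure (AddSubgroup.zmultiples T) ℝ volume :=
    ⟨fun c s _ => measure_preimage_add _ _ _⟩
  have hpre : (fun t => c - t) ⁻¹' Ioc (c - T) (c - T + T) = Ico 0 T := by
    ext t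
    simp only [mem_preimage, mem_Ioc, mem_Ico]
    constructor <;> intro ht <;> constructor <;> linarith [ht.1, ht.2]
  calc ∫⁻ t in Ico 0 T, g (c - t) = ∫⁻ t in Ioc (c - T) (c - T + T), g t := by
        rw [← hpre, (Measure.measurePreserving_sub_left volume c).setLIntegral_comp_preimage_emb
          (measurableEmbedding_subLeft c)]
    _ = ∫⁻ t in Ioc 0 (0 + T), g t :=
        (isAddFundamentalDomain_Ioc hT (c - T)).setLIntegral_eq (isAddFundamentalDomain_Ioc hT 0) g
          hg.map_vadd_zmultiples
    _ = ∫⁻ t in Ico 0 T, g t := by rw [zero_add, restrict_Ico_eq_restrict_Ioc]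

section PeriodicProd

variable {E : Type*} [AddGroup E] [MeasurableSpace E] [MeasurableAdd₂ E] [MeasurableNeg E]
  {ν : Measure E} [SFinite ν] [ν.IsAddLeftInvariant] [ν.IsNegInvariant]

theorem lintegral_Ico_prod_comp_sub_left {g : ℝ × E → ℝ≥0∞} (hg : Measurable g)
    (hper : ∀ a y, g (a + 1, y) = g (a, y)) (c : ℝ × E) :
    ∫⁻ x, g (c - x) ∂(volume.restrict (Ico 0 1)).prod ν =
      ∫⁻ x, g x ∂(volume.restrict (Ico 0 1)).prod ν := by
  obtain ⟨c₁, c₂⟩ := c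
  have hν (a : ℝ) : ∫⁻ y, g (a, c₂ - y) ∂ν = ∫⁻ y, g (a, y) ∂ν :=
    (Measure.measurePreserving_sub_left ν c₂).lintegral_comp (hg.comp measurable_prodMk_left)
  have hper' : Function.Periodic (fun a => ∫⁻ y, g (a, y) ∂ν) 1 := fun a => by simp only [hper]
  rw [lintegral_prod _ (by fun_prop), lintegral_prod _ hg.aemeasurable]
  simp only [Prod.mk_sub_mk, hν]
  exact hper'.setLIntegral_Ico_comp_sub_left one_pos c₁

theorem lintegral_Ico_prod_comp_sub_right {g : ℝ × E → ℝ≥0∞} (hg : Measurable g)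
    (hper : ∀ a y, g (a + 1, y) = g (a, y)) (c : ℝ × E) :
    ∫⁻ x, g (x - c) ∂(volume.restrict (Ico 0 1)).prod ν =
      ∫⁻ x, g x ∂(volume.restrict (Ico 0 1)).prod ν := by
  have hper' (a : ℝ) (y : E) : g (-(a + 1, y)) = g (-(a, y)) := by
    rw [Prod.neg_mk, Prod.neg_mk, ← hper, show -(a + 1) + 1 = -a by ring]
  have hneg := lintegral_Ico_prod_comp_sub_left (ν := ν) (hg.comp measurable_neg) hper'
  calc ∫⁻ x, g (x - c) ∂(volume.restrict (Ico 0 1)).prod ν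
      = ∫⁻ x, g (-(c - x)) ∂(volume.restrict (Ico 0 1)).prod ν := by simp only [neg_sub]
    _ = ∫⁻ x, g (-(0 - x)) ∂(volume.restrict (Ico 0 1)).prod ν := (hneg c).trans (hneg 0).symm
    _ = ∫⁻ x, g x ∂(volume.restrict (Ico 0 1)).prod ν := by simp only [zero_sub, neg_neg]

theorem lintegral_lintegral_mul_comp_sub {F G : ℝ × E → ℝ≥0∞} (hF : Measurable F)
    (hG : Measurable G) (hGper : ∀ a y, G (a + 1, y) = G (a, y)) :
    ∫⁻ x, ∫⁻ y, F y * G (x - y) ∂(volume.restrict (Ico 0 1)).prod ν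
        ∂(volume.restrict (Ico 0 1)).prod ν =
      (∫⁻ y, F y ∂(volume.restrict (Ico 0 1)).prod ν) *
        ∫⁻ x, G x ∂(volume.restrict (Ico 0 1)).prod ν := by
  rw [lintegral_lintegral_swap (by fun_prop), ← lintegral_mul_const _ hF]
  refine lintegral_congr fun y => ?_
  rw [lintegral_const_mul _ (by fun_prop), lintegral_Ico_prod_comp_sub_right hG hGper]

end PeriodicProd

theorem one_add_sq_norm_le {E : Type*} [SeminormedAddCommGroup E] (x y : E) :
    1 + ‖x‖ ^ 2 ≤ 2 * (1 + ‖y‖ ^ 2) * (1 + ‖x - y‖ ^ 2) := by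
  have hx : ‖x‖ ≤ ‖y‖ + ‖x - y‖ := norm_le_norm_add_norm_sub' x y
  nlinarith [norm_nonneg x, norm_nonneg y, norm_nonneg (x - y), sq_nonneg (‖y‖ - ‖x - y‖),
    sq_nonneg (‖y‖ * ‖x - y‖)]

theorem one_add_sq_norm_rpow_le {E : Type*} [SeminormedAddCommGroup E] {lam : ℝ} (hlam : 0 ≤ lam)
    (x y : E) :
    (1 + ‖x‖ ^ 2) ^ lam ≤ 2 ^ lam * (1 + ‖y‖ ^ 2) ^ lam * (1 + ‖x - y‖ ^ 2) ^ lam := by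
  rw [← Real.mul_rpow (by norm_num) (by positivity), ← Real.mul_rpow (by positivity) (by positivity)]
  exact Real.rpow_le_rpow (by positivity) (one_add_sq_norm_le x y) hlam

theorem stmt7_general (k : ℕ) (lam : ℝ) (hlam : 0 < lam) (q : ℝ) (hq : 1 ≤ q)
    (f h : ℝ × EuclideanSpace ℝ (Fin k) → ENNReal)
    (hf : Measurable f) (hh : Measurable h)
    (hfper : ∀ a y, f (a + 1, y) = f (a, y))
    (hf1 : ∫⁻ x, f x ∂(cylMeasure k) = 1) :
    ∫⁻ x, (∫⁻ y, h y * f (x.1 - y.1, x.2 - y.2) ∂(cylMeasure k)) ^ q *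
        ENNReal.ofReal ((1 + ‖x.2‖ ^ 2) ^ lam) ∂(cylMeasure k) ≤
      ENNReal.ofReal ((2 : ℝ) ^ lam) *
        (∫⁻ x, f x * ENNReal.ofReal ((1 + ‖x.2‖ ^ 2) ^ lam) ∂(cylMeasure k)) *
        (∫⁻ y, h y ^ q * ENNReal.ofReal ((1 + ‖y.2‖ ^ 2) ^ lam) ∂(cylMeasure k)) := by
  unfold cylMeasure at hf1 ⊢
  set μ := (volume.restrict (Ico (0 : ℝ) 1)).prod (volume : Measure (EuclideanSpace ℝ (Fin k)))
  set C := ENNReal.ofReal ((2 : ℝ) ^ lam)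
  set w : EuclideanSpace ℝ (Fin k) → ℝ≥0∞ := fun v => ENNReal.ofReal ((1 + ‖v‖ ^ 2) ^ lam)
  have hjensen (x) : (∫⁻ y, h y * f (x - y) ∂μ) ^ q ≤ ∫⁻ y, h y ^ q * f (x - y) ∂μ :=
    rpow_lintegral_mul_le_lintegral_rpow_mul hq hh.aemeasurable (by fun_prop)
      ((lintegral_Ico_prod_comp_sub_left hf hfper x).trans hf1)
  have hpeetre (x y : ℝ × EuclideanSpace ℝ (Fin k)) : w x.2 ≤ C * w y.2 * w (x - y).2 := by
    rw [← ofReal_mul (by positivity), ← ofReal_mul (by positivity)]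
    exact ofReal_le_ofReal (one_add_sq_norm_rpow_le hlam.le x.2 y.2)
  calc ∫⁻ x, (∫⁻ y, h y * f (x.1 - y.1, x.2 - y.2) ∂μ) ^ q * w x.2 ∂μ
      ≤ ∫⁻ x, ∫⁻ y, h y ^ q * f (x - y) * w x.2 ∂μ ∂μ := by
        gcongr with x
        rw [lintegral_mul_const _ (by fun_prop)]
        exact mul_le_mul_left (hjensen x) _
    _ ≤ ∫⁻ x, ∫⁻ y, h y ^ q * f (x - y) * (C * w y.2 * w (x - y).2) ∂μ ∂μ := by
        gcongr with x y
        exact hpeetre x y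
    _ = C * ((∫⁻ y, h y ^ q * w y.2 ∂μ) * ∫⁻ z, f z * w z.2 ∂μ) := by
        rw [← lintegral_lintegral_mul_comp_sub (by fun_prop) (by fun_prop) (by simp [hfper]),
          ← lintegral_const_mul' _ _ ofReal_ne_top]
        refine lintegral_congr fun x => ?_
        rw [← lintegral_const_mul' _ _ ofReal_ne_top]
        exact lintegral_congr fun y => by ring
    _ = _ := by ring

/-- Weighted convolution bound: for `d ≥ 2` (`k = d-1 ≥ 1`), `λ > 0`,
`q ≥ 1`, with `w(x) = (1+|x^{2…d}|²)^λ` and `π(y) = (1+|y^{2…d}|²)^λ`, if `f, h ≥ 0`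
are measurable, `ℤ`-periodic in the first coordinate, and `∫_{[0,1)×ℝ^{d-1}} f = 1`,
then `∫ (h⋆f)^q w ≤ 2^λ (∫ f w)(∫ h^q π)`, where
`(h⋆f)(x) = ∫_{[0,1)×ℝ^{d-1}} h(y) f(x-y) dy`. -/
theorem stmt7 (k : ℕ) (hk : 1 ≤ k) (lam : ℝ) (hlam : 0 < lam) (q : ℝ) (hq : 1 ≤ q)
    (f h : ℝ × EuclideanSpace ℝ (Fin k) → ENNReal)
    (hf : Measurable f) (hh : Measurable h)
    (hfper : ∀ a y, f (a + 1, y) = f (a, y))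
    (hhper : ∀ a y, h (a + 1, y) = h (a, y))
    (hf1 : ∫⁻ x, f x ∂(cylMeasure k) = 1) :
    ∫⁻ x, (∫⁻ y, h y * f (x.1 - y.1, x.2 - y.2) ∂(cylMeasure k)) ^ q *
        ENNReal.ofReal ((1 + ‖x.2‖ ^ 2) ^ lam) ∂(cylMeasure k) ≤
      ENNReal.ofReal ((2 : ℝ) ^ lam) *
        (∫⁻ x, f x * ENNReal.ofReal ((1 + ‖x.2‖ ^ 2) ^ lam) ∂(cylMeasure k)) *
        (∫⁻ y, h y ^ q * ENNReal.ofReal ((1 + ‖y.2‖ ^ 2) ^ lam) ∂(cylMeasure k)) :=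
  stmt7_general k lam hlam q hq f h hf hh hfper hf1
end

section
/- Let d ≥ 1, N ≥ 1, α > 0, A ≥ 0, B ≥ 0, M ≥ 0 and L ≥ 0. Let ψ : ℝ → ℝ be a C¹, ℤ-periodic, nonnegative function with sup|ψ| ≤ A and sup|ψ'| ≤ B, set φ = α + ψ, and let h : ℝ^d → ℝ satisfy sup|h| ≤ M and be Lipschitz with constant L. For y ∈ ℝ and x⃗ = (x_1,…,x_N) ∈ (ℝ^d)^N define F(y, x⃗) = (Σ_{m=1}^N φ(y − x_m¹) h(x_m)) / (Σ_{m=1}^N φ(y − x_m¹)). Then there exists a constant K, depending only on α, A, B, M and L (and not on N), such that for all y, ȳ ∈ ℝ and x⃗, x̄⃗ ∈ (ℝ^d)^N: |F(y, x⃗) − F(ȳ, x̄⃗)| ≤ K ( |y − ȳ| + (1/N) Σ_{m=1}^N |x_m − x̄_m| ). -/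
/-!
The estimator is a weighted average `(∑ wₘ fₘ) / (∑ wₘ)` with weights `wₘ = α + ψ(y - xₘ¹) ≥ α`,
so its denominator is at least `Nα`. Since `ψ` is `B`-Lipschitz and `h` is bounded and
`L`-Lipschitz, numerator and denominator each move by `O(∑ₘ δₘ)` with
`δₘ = |y - ȳ| + ‖xₘ - x̄ₘ‖`; splitting `S/T - S'/T' = (S - S')/T + (S'/T')(T' - T)/T` and using
`|S'| ≤ M T'`, the quotient moves by `O((1/N) ∑ₘ δₘ)`, uniformly in `N`.
-/

open Finset

lemma abs_div_sub_div_le {S S' T T' M c : ℝ} (hc : 0 < c) (hT : c ≤ T) (hT' : c ≤ T')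
    (hM : 0 ≤ M) (hS' : |S'| ≤ M * T') :
    |S / T - S' / T'| ≤ (|S - S'| + M * |T - T'|) / c := by
  have hT0 : 0 < T := hc.trans_le hT
  have hT'0 : 0 < T' := hc.trans_le hT'
  have hsplit : S / T - S' / T' = (S - S') / T + S' / T' * ((T' - T) / T) := by
    field_simp; ring
  have hratio : |S'| / T' ≤ M := (div_le_iff₀ hT'0).2 hS'
  calc |S / T - S' / T'|
      ≤ |S - S'| / T + |S'| / T' * (|T - T'| / T) := by
        rw [hsplit, abs_sub_comm T T']
        refine (abs_add_le _ _).trans_eq ?_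
        rw [abs_mul, abs_div, abs_div, abs_div, abs_of_pos hT0, abs_of_pos hT'0, abs_sub_comm]
    _ ≤ |S - S'| / c + M * (|T - T'| / c) := by gcongr
    _ = (|S - S'| + M * |T - T'|) / c := by ring

section WeightedAverage

variable {ι : Type*} [Fintype ι]

noncomputable def weightedAverage (w f : ι → ℝ) : ℝ := (∑ i, w i * f i) / ∑ i, w i

lemma abs_sum_mul_le_mul_sum {w f : ι → ℝ} {M : ℝ} (hw : ∀ i, 0 ≤ w i) (hf : ∀ i, |f i| ≤ M) :
    |∑ i, w i * f i| ≤ M * ∑ i, w i := by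
  rw [mul_sum]
  refine (abs_sum_le_sum_abs _ _).trans (sum_le_sum fun i _ => ?_)
  rw [abs_mul, abs_of_nonneg (hw i), mul_comm]
  exact mul_le_mul_of_nonneg_right (hf i) (hw i)

lemma abs_weightedAverage_sub_le [Nonempty ι] {w w' f f' δ : ι → ℝ} {a W M B L : ℝ}
    (ha : 0 < a) (hw : ∀ i, a ≤ w i) (hw' : ∀ i, a ≤ w' i) (hW : ∀ i, w i ≤ W)
    (hM : 0 ≤ M) (hf' : ∀ i, |f' i| ≤ M)
    (hwδ : ∀ i, |w i - w' i| ≤ B * δ i) (hfδ : ∀ i, |f i - f' i| ≤ L * δ i) :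
    |weightedAverage w f - weightedAverage w' f'| ≤
      (2 * M * B + W * L) / a * ((∑ i, δ i) / Fintype.card ι) := by
  have hlower : ∀ v : ι → ℝ, (∀ i, a ≤ v i) → Fintype.card ι * a ≤ ∑ i, v i := fun v hv => by
    simpa using sum_le_sum fun i (_ : i ∈ univ) => hv i
  have hnum : |∑ i, w i * f i - ∑ i, w' i * f' i| ≤ (M * B + W * L) * ∑ i, δ i := by
    rw [← sum_sub_distrib, mul_sum]
    refine (abs_sum_le_sum_abs _ _).trans (sum_le_sum fun i _ => ?_)
    have hw0 : 0 ≤ w i := ha.le.trans (hw i)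
    calc |w i * f i - w' i * f' i| = |(w i - w' i) * f' i + w i * (f i - f' i)| := by ring_nf
      _ ≤ |w i - w' i| * |f' i| + w i * |f i - f' i| := by
        rw [← abs_of_nonneg hw0, ← abs_mul, ← abs_mul, abs_of_nonneg hw0]
        exact abs_add_le _ _
      _ ≤ B * δ i * M + W * (L * δ i) :=
        add_le_add
          (mul_le_mul (hwδ i) (hf' i) (abs_nonneg _) ((abs_nonneg _).trans (hwδ i)))
          (mul_le_mul (hW i) (hfδ i) (abs_nonneg _) (hw0.trans (hW i)))
      _ = (M * B + W * L) * δ i := by ring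
  have hden : |∑ i, w i - ∑ i, w' i| ≤ B * ∑ i, δ i := by
    rw [← sum_sub_distrib, mul_sum]
    exact (abs_sum_le_sum_abs _ _).trans (sum_le_sum fun i _ => hwδ i)
  calc |weightedAverage w f - weightedAverage w' f'|
      ≤ (|∑ i, w i * f i - ∑ i, w' i * f' i| + M * |∑ i, w i - ∑ i, w' i|) /
          (Fintype.card ι * a) :=
        abs_div_sub_div_le (by positivity) (hlower w hw) (hlower w' hw') hM
          (abs_sum_mul_le_mul_sum (fun i => ha.le.trans (hw' i)) hf')
    _ ≤ ((M * B + W * L) * ∑ i, δ i + M * (B * ∑ i, δ i)) / (Fintype.card ι * a) := by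
        gcongr
    _ = (2 * M * B + W * L) / a * ((∑ i, δ i) / Fintype.card ι) := by
        field_simp; ring

end WeightedAverage

lemma abs_sub_le_of_abs_deriv_le {ψ : ℝ → ℝ} {B : ℝ} (hψ : Differentiable ℝ ψ)
    (hB : ∀ x, |deriv ψ x| ≤ B) (s t : ℝ) : |ψ s - ψ t| ≤ B * |s - t| := by
  simpa [Real.norm_eq_abs] using convex_univ.norm_image_sub_le_of_norm_deriv_le
    (fun x _ => hψ.differentiableAt) (fun x _ => hB x) (Set.mem_univ t) (Set.mem_univ s)

/-- Lipschitz estimate for the empirical Nadaraya–Watson estimator: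
with `φ = α + ψ` (`α > 0`, `ψ ≥ 0` of class `C¹`, `ℤ`-periodic, `sup|ψ| ≤ A`,
`sup|ψ'| ≤ B`) and `h` bounded by `M` and `L`-Lipschitz, setting
`F(y, x⃗) = (∑_{m=1}^N φ(y - x_m¹) h(x_m)) / (∑_{m=1}^N φ(y - x_m¹))`, there is a
constant `K`, depending only on `α, A, B, M, L` (and not on `N` or `d`), such that
`|F(y, x⃗) - F(ȳ, x̄⃗)| ≤ K (|y - ȳ| + (1/N) ∑_m |x_m - x̄_m|)`. -/
theorem stmt15 (α : ℝ) (hα : 0 < α) (A B M L : ℝ)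
    (hA : 0 ≤ A) (hB : 0 ≤ B) (hM : 0 ≤ M) (hL : 0 ≤ L) :
    ∃ K : ℝ, 0 < K ∧
      ∀ (d : ℕ) (hd : 0 < d) (N : ℕ), 1 ≤ N →
      ∀ ψ : ℝ → ℝ, ContDiff ℝ 1 ψ → (∀ x, 0 ≤ ψ x) → (∀ x, ψ (x + 1) = ψ x) →
        (∀ x, |ψ x| ≤ A) → (∀ x, |deriv ψ x| ≤ B) →
      ∀ h : EuclideanSpace ℝ (Fin d) → ℝ, (∀ z, |h z| ≤ M) →
        LipschitzWith (Real.toNNReal L) h →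
      ∀ (y ybar : ℝ) (x xbar : Fin N → EuclideanSpace ℝ (Fin d)),
        |(∑ m : Fin N, (α + ψ (y - x m ⟨0, hd⟩)) * h (x m)) /
            (∑ m : Fin N, (α + ψ (y - x m ⟨0, hd⟩))) -
          (∑ m : Fin N, (α + ψ (ybar - xbar m ⟨0, hd⟩)) * h (xbar m)) /
            (∑ m : Fin N, (α + ψ (ybar - xbar m ⟨0, hd⟩)))| ≤
        K * (|y - ybar| + (1 / N : ℝ) * ∑ m : Fin N, ‖x m - xbar m‖) := by
  refine ⟨(2 * M * B + (α + A) * L) / α + 1, by positivity, ?_⟩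
  intro d hd N hN ψ hψ hψ0 _ hψA hψB h hhM hhL y ybar x xbar
  have : Nonempty (Fin N) := Fin.pos_iff_nonempty.mp hN
  set i : Fin d := ⟨0, hd⟩
  have hψlip := abs_sub_le_of_abs_deriv_le (hψ.differentiable one_ne_zero) hψB
  have hweight (m : Fin N) : |(α + ψ (y - x m i)) - (α + ψ (ybar - xbar m i))| ≤
      B * (|y - ybar| + ‖x m - xbar m‖) := by
    have hcoord : |x m i - xbar m i| ≤ ‖x m - xbar m‖ := by
      simpa using PiLp.norm_apply_le (x m - xbar m) i
    rw [add_sub_add_left_eq_sub]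
    refine (hψlip _ _).trans (mul_le_mul_of_nonneg_left ?_ hB)
    rw [sub_sub_sub_comm]
    exact (abs_sub _ _).trans (add_le_add_right hcoord _)
  have hvalue (m : Fin N) : |h (x m) - h (xbar m)| ≤ L * (|y - ybar| + ‖x m - xbar m‖) := by
    have := hhL.norm_sub_le (x m) (xbar m)
    rw [Real.norm_eq_abs, Real.coe_toNNReal L hL] at this
    exact this.trans (mul_le_mul_of_nonneg_left (le_add_of_nonneg_left (abs_nonneg _)) hL)
  have hbound := abs_weightedAverage_sub_le (W := α + A) hα
    (fun m => le_add_of_nonneg_right (hψ0 _)) (fun m => le_add_of_nonneg_right (hψ0 _))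
    (fun m => add_le_add_right (le_of_abs_le (hψA _)) α) hM (fun m => hhM (xbar m))
    hweight hvalue
  have hmean : (∑ m, (|y - ybar| + ‖x m - xbar m‖)) / Fintype.card (Fin N) =
      |y - ybar| + (1 / N : ℝ) * ∑ m, ‖x m - xbar m‖ := by
    have : (N : ℝ) ≠ 0 := by positivity
    rw [sum_add_distrib, sum_const, card_univ, Fintype.card_fin, nsmul_eq_mul]
    field_simp
  rw [hmean] at hbound
  exact hbound.trans (mul_le_mul_of_nonneg_right (by linarith) (by positivity))
end
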